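/- Let D be a deterministic adaptive algorithm making exactly t distinct queries and consider the coupled process: first run D against fresh uniform answers a₁,…,a_t ∈ R; then sample u ← U; then rerun D, answering query i with a_i as long as (q′_{1..i}, u) ∉ BAD, and switching to answers f_{u,v} for an appropriately (conditionally uniformly) sampled v once BAD occurs. Under the two hypotheses of the framework lemma, the pair (U, V) produced by this process is uniformly distributed over U × V. -/

import Mathlib

/-- The queries a deterministic adaptive algorithm makes when fed the answer list
`a`: the `i`-th query is determined by the first `i-1` answers. -/
def queryList {D R : Type*} (nq : List R → D) (a : List R) : List D :=
  (List.range a.length).map (fun i => nq (a.take i))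

/-- The number of first-run answers that are kept in the second run of the coupled
process: if `i₀` is the first index (in `0,…,t`) at which the query prefix induced by
the first-run answers `a` becomes BAD for `u`, the process resamples `v` when making
query `i₀`, keeping the first `i₀ − 1` answers (for `i₀ = 0`, i.e. `(λ, u) ∈ BAD`,
`v` is uniform over all of `V`); if BAD never occurs, all `t` answers are kept. -/
def cutoff {D R U : Type*} (nq : List R → D) (BAD : List D → U → Prop)
    [∀ s u, Decidable (BAD s u)] (t : ℕ) (a : List R) (u : U) : ℕ :=
  if h : ((Finset.range (t + 1)).filter
      (fun i => BAD ((queryList nq a).take i) u)).Nonempty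
  then ((Finset.range (t + 1)).filter
      (fun i => BAD ((queryList nq a).take i) u)).min' h - 1
  else t

/-- The set of `v ∈ V` from which the coupled process samples, given first-run
answers `a` and `u`: those `v` for which `f_{u,v}` agrees with the kept answers. -/
def consistent {D R U V : Type*} [Fintype V] [DecidableEq R]
    (f : U → V → D → R) (nq : List R → D) (BAD : List D → U → Prop)
    [∀ s u, Decidable (BAD s u)] (t : ℕ) (a : List R) (u : U) : Finset V :=
  Finset.univ.filter (fun v : V =>
    ((queryList nq a).take (cutoff nq BAD t a u)).map (f u v)
      = a.take (cutoff nq BAD t a u))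

/-!
Fix `u`, `v` and let `P` be the transcript of the algorithm run against the oracle `f u v`.
The cutoff is a stopping time: it is determined by the answers it keeps. Hence `v` is
consistent with first-run answers `a` exactly when `a` agrees with `P` on the first
`c = cutoff P` positions, and then `cutoff a = c`. For such `a` the consistent set has
`|V| / |R|^c` elements, by the uniformity hypothesis when the kept query prefix is not BAD,
and because it is all of `V` otherwise (then `c = 0`). Summing `|R|^c / |V|` over the
`|R|^(t-c)` such `a` gives `|R|^t / |V|`.
-/

open Finset

section StopIndex

variable (p q : ℕ → Prop) [DecidablePred p] [DecidablePred q] (t : ℕ)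

-- `cutoff nq BAD t a u` unfolds to `stopIndex (fun i => BAD ((queryList nq a).take i) u) t`.
def stopIndex : ℕ :=
  if h : ((range (t + 1)).filter p).Nonempty then ((range (t + 1)).filter p).min' h - 1 else t

variable {p q t}

lemma stopIndex_le : stopIndex p t ≤ t := by
  unfold stopIndex
  split_ifs with h
  · have := (mem_filter.1 (min'_mem _ h)).1
    rw [mem_range] at this
    omega
  · exact le_rfl

lemma stopIndex_eq_zero_of_stop (h : p (stopIndex p t)) : stopIndex p t = 0 := by
  have hmem : stopIndex p t ∈ (range (t + 1)).filter p :=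
    mem_filter.2 ⟨mem_range.2 (Nat.lt_succ_of_le stopIndex_le), h⟩
  have hne : ((range (t + 1)).filter p).Nonempty := ⟨_, hmem⟩
  have hdef : stopIndex p t = ((range (t + 1)).filter p).min' hne - 1 := dif_pos hne
  have := min'_le _ _ hmem
  omega

lemma stopIndex_congr (h : ∀ i ≤ stopIndex p t + 1, p i ↔ q i) : stopIndex q t = stopIndex p t := by
  by_cases hne : ((range (t + 1)).filter p).Nonempty
  · set m := ((range (t + 1)).filter p).min' hne
    have hdef : stopIndex p t = m - 1 := dif_pos hne
    obtain ⟨hmt, hpm⟩ := mem_filter.1 (min'_mem _ hne)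
    have hqm : q m := (h m (by omega)).1 hpm
    have hneq : ((range (t + 1)).filter q).Nonempty := ⟨m, mem_filter.2 ⟨hmt, hqm⟩⟩
    have hmin : ((range (t + 1)).filter q).min' hneq = m := by
      refine (min'_eq_iff _ _ _).2 ⟨mem_filter.2 ⟨hmt, hqm⟩, fun i hi => ?_⟩
      obtain ⟨hit, hqi⟩ := mem_filter.1 hi
      by_contra! him
      exact not_lt.2 (min'_le _ i (mem_filter.2 ⟨hit, (h i (by omega)).2 hqi⟩)) him
    rw [hdef, ← hmin]
    exact dif_pos hneq
  · have hdef : stopIndex p t = t := dif_neg hne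
    have hfilter : (range (t + 1)).filter q = (range (t + 1)).filter p :=
      filter_congr fun i hi => (h i (by rw [mem_range] at hi; omega)).symm
    unfold stopIndex
    rw [hfilter]

end StopIndex

section Transcript

variable {D R : Type*}

def transcript (o : D → R) (nq : List R → D) : ℕ → List R
  | 0 => []
  | n + 1 => transcript o nq n ++ [o (nq (transcript o nq n))]

@[simp]
lemma length_transcript (o : D → R) (nq : List R → D) (n : ℕ) :
    (transcript o nq n).length = n := by
  induction n with
  | zero => rfl
  | succ n ih => simp [transcript, ih]

lemma take_transcript (o : D → R) (nq : List R → D) {m n : ℕ} (h : m ≤ n) :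
    (transcript o nq n).take m = transcript o nq m := by
  induction n with
  | zero => rw [Nat.le_zero.1 h]; rfl
  | succ n ih =>
    rcases Nat.lt_or_ge m (n + 1) with hm | hm
    · rw [transcript, List.take_append_of_le_length (by simp; omega), ih (by omega)]
    · rw [le_antisymm h hm, List.take_of_length_le (by simp)]

@[simp]
lemma length_queryList (nq : List R → D) (a : List R) :
    (queryList nq a).length = a.length := by simp [queryList]

lemma getElem_queryList (nq : List R → D) (a : List R) {k : ℕ}
    (hk : k < (queryList nq a).length) :
    (queryList nq a)[k] = nq (a.take k) := by
  simp [queryList]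

lemma take_succ_queryList_congr (nq : List R → D) {a b : List R} (hab : a.length = b.length)
    {i : ℕ} (h : a.take i = b.take i) :
    (queryList nq a).take (i + 1) = (queryList nq b).take (i + 1) := by
  simp only [queryList, ← List.map_take, List.take_range, hab]
  refine List.map_congr_left fun j hj => ?_
  have hji : j ≤ i := by rw [List.mem_range] at hj; omega
  rw [← min_eq_left hji, ← List.take_take, h, List.take_take]

lemma map_take_queryList_eq_iff (o : D → R) (nq : List R → D) (a : List R) {c : ℕ}
    (hc : c ≤ a.length) :
    ((queryList nq a).take c).map o = a.take c ↔ a.take c = transcript o nq c := by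
  induction c with
  | zero => simp [transcript]
  | succ c ih =>
    have hca : c < a.length := hc
    rw [← List.take_concat_get' a c hca,
      ← List.take_concat_get' (queryList nq a) c (by simpa using hca), getElem_queryList,
      List.map_append, List.map_singleton, transcript, List.append_singleton_inj,
      List.append_singleton_inj, ih hca.le]
    constructor
    · rintro ⟨hprefix, hlast⟩
      exact ⟨hprefix, by rw [← hlast, hprefix]⟩
    · rintro ⟨hprefix, hlast⟩
      exact ⟨hprefix, by rw [hlast, hprefix]⟩

end Transcript

section Cutoff

variable {D R U : Type*} (nq : List R → D) (BAD : List D → U → Prop) [∀ s u, Decidable (BAD s u)]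
  (t : ℕ) (u : U)

lemma cutoff_le (a : List R) : cutoff nq BAD t a u ≤ t := stopIndex_le

lemma cutoff_eq_zero_of_bad {a : List R} (h : BAD ((queryList nq a).take (cutoff nq BAD t a u)) u) :
    cutoff nq BAD t a u = 0 :=
  stopIndex_eq_zero_of_stop h

variable {nq BAD t u}

lemma cutoff_congr {a b : List R} (hab : a.length = b.length)
    (h : a.take (cutoff nq BAD t a u) = b.take (cutoff nq BAD t a u)) :
    cutoff nq BAD t b u = cutoff nq BAD t a u := by
  have hqueries := take_succ_queryList_congr nq hab h
  refine stopIndex_congr fun i hi => ?_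
  have : (queryList nq a).take i = (queryList nq b).take i := by
    rw [← min_eq_left hi, ← List.take_take, ← List.take_take (l := queryList nq b)]
    exact congrArg (List.take i) hqueries
  rw [this]

lemma take_cutoff_eq_comm {a b : List R} (hab : a.length = b.length) :
    a.take (cutoff nq BAD t a u) = b.take (cutoff nq BAD t a u) ↔
      a.take (cutoff nq BAD t b u) = b.take (cutoff nq BAD t b u) := by
  constructor
  · intro h
    rwa [cutoff_congr hab h]
  · intro h
    rwa [cutoff_congr hab.symm h.symm]

end Cutoff

section Consistent

variable {D R U V : Type*} [Fintype V] [DecidableEq R] (f : U → V → D → R) (nq : List R → D)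
  (BAD : List D → U → Prop) [∀ s u, Decidable (BAD s u)] {t : ℕ} (u : U)

lemma mem_consistent_iff (v : V) {a : List R} (ha : a.length = t) :
    v ∈ consistent f nq BAD t a u ↔
      a.take (cutoff nq BAD t (transcript (f u v) nq t) u)
        = (transcript (f u v) nq t).take (cutoff nq BAD t (transcript (f u v) nq t) u) := by
  have hc := cutoff_le nq BAD t u a
  rw [consistent, mem_filter, map_take_queryList_eq_iff _ _ _ (ha ▸ hc),
    ← take_transcript _ _ hc, take_cutoff_eq_comm (by simp [ha])]
  simp

lemma card_consistent_mul_pow_cutoff [Fintype R]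
    (h1 : ∀ q : List D, q.length ≤ t → q.Nodup → ∀ u : U, ¬ BAD q u →
      ∀ ys : List R, ys.length = q.length →
        (Finset.univ.filter (fun v : V => q.map (f u v) = ys)).card
          * (Fintype.card R) ^ q.length = Fintype.card V)
    (hdistinct : ∀ a : List R, a.length ≤ t → (queryList nq a).Nodup)
    {a : List R} (ha : a.length = t) :
    #(consistent f nq BAD t a u) * Fintype.card R ^ cutoff nq BAD t a u = Fintype.card V := by
  set c := cutoff nq BAD t a u
  by_cases hbad : BAD ((queryList nq a).take c) u
  · simp [consistent, c, cutoff_eq_zero_of_bad nq BAD t u hbad]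
  · have hlen : ((queryList nq a).take c).length = c := by
      simp [ha, c, cutoff_le]
    have := h1 _ (by rw [hlen]; exact cutoff_le nq BAD t u a)
      ((hdistinct a ha.le).sublist (List.take_sublist _ _)) u hbad (a.take c)
      (by simp [hlen, ha, c, cutoff_le])
    rwa [hlen] at this

lemma one_div_card_consistent [Fintype R]
    (h1 : ∀ q : List D, q.length ≤ t → q.Nodup → ∀ u : U, ¬ BAD q u →
      ∀ ys : List R, ys.length = q.length →
        (Finset.univ.filter (fun v : V => q.map (f u v) = ys)).card
          * (Fintype.card R) ^ q.length = Fintype.card V)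
    (hdistinct : ∀ a : List R, a.length ≤ t → (queryList nq a).Nodup)
    {v : V} {a : List R} (ha : a.length = t) (hv : v ∈ consistent f nq BAD t a u) :
    (1 : ℝ) / #(consistent f nq BAD t a u)
      = (Fintype.card R : ℝ) ^ cutoff nq BAD t a u / Fintype.card V := by
  have hV : (Fintype.card V : ℝ) ≠ 0 := Nat.cast_ne_zero.2 (Fintype.card_pos_iff.2 ⟨v⟩).ne'
  have hS : (#(consistent f nq BAD t a u) : ℝ) ≠ 0 := Nat.cast_ne_zero.2 (card_ne_zero_of_mem hv)
  rw [eq_div_iff hV, ← card_consistent_mul_pow_cutoff f nq BAD u h1 hdistinct ha]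
  push_cast
  field_simp

end Consistent

lemma card_filter_take_ofFn_eq {R : Type*} [Fintype R] [DecidableEq R] {t c : ℕ} (hc : c ≤ t)
    {l : List R} (hl : l.length = t) :
    #{a : Fin t → R | (List.ofFn a).take c = l.take c} = Fintype.card R ^ (t - c) := by
  obtain ⟨g, rfl⟩ : ∃ g : Fin t → R, List.ofFn g = l :=
    ⟨fun i => l[(i : ℕ)], List.ext_getElem (by simp [hl]) (by simp)⟩
  have hfilter : ({a : Fin t → R | (List.ofFn a).take c = (List.ofFn g).take c} : Finset _)
      = Fintype.piFinset fun i : Fin t => if (i : ℕ) < c then {g i} else univ := by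
    ext a
    simp only [mem_filter, mem_univ, true_and, ← Fin.ofFn_take_eq_take_ofFn hc,
      List.ofFn_inj, funext_iff, Fin.take_apply, Fintype.mem_piFinset]
    refine ⟨fun h i => ?_, fun h x => ?_⟩
    · split_ifs with hi
      · exact mem_singleton.2 (h ⟨i, hi⟩)
      · exact mem_univ _
    · simpa [x.2] using h (Fin.castLE hc x)
  simp only [hfilter, Fintype.card_piFinset, apply_ite card, card_singleton, card_univ,
    prod_ite, prod_const_one, one_mul, prod_const, filter_not, card_sdiff]
  rw [inter_univ, Fin.card_filter_val_lt, Fintype.card_fin, min_eq_right hc]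

theorem stmt_19_general {U V D R : Type*} [Fintype V] [Fintype R]
    [DecidableEq V] [DecidableEq R]
    (f : U → V → D → R) (BAD : List D → U → Prop) [∀ s u, Decidable (BAD s u)]
    (t : ℕ)
    (h1 : ∀ q : List D, q.length ≤ t → q.Nodup → ∀ u : U, ¬ BAD q u →
      ∀ ys : List R, ys.length = q.length →
        (Finset.univ.filter (fun v : V => q.map (f u v) = ys)).card
          * (Fintype.card R) ^ q.length = Fintype.card V)
    (nq : List R → D)
    (hdistinct : ∀ a : List R, a.length ≤ t → (queryList nq a).Nodup)
    (u : U) (v : V) :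
    ∑ a : Fin t → R,
      (if v ∈ consistent f nq BAD t (List.ofFn a) u
        then (1 : ℝ) / (consistent f nq BAD t (List.ofFn a) u).card else 0)
      = (Fintype.card R : ℝ) ^ t / Fintype.card V := by
  set P := transcript (f u v) nq t
  set c := cutoff nq BAD t P u
  have hc : c ≤ t := cutoff_le nq BAD t u P
  have hP : P.length = t := length_transcript _ _ _
  have hterm : ∀ a : Fin t → R,
      (if v ∈ consistent f nq BAD t (List.ofFn a) u
        then (1 : ℝ) / (consistent f nq BAD t (List.ofFn a) u).card else 0)
      = if (List.ofFn a).take c = P.take c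
        then (Fintype.card R : ℝ) ^ c / Fintype.card V else 0 := by
    intro a
    have hmem := mem_consistent_iff f nq BAD u v (List.length_ofFn (f := a))
    by_cases h : (List.ofFn a).take c = P.take c
    · rw [if_pos (hmem.2 h), if_pos h,
        one_div_card_consistent f nq BAD u h1 hdistinct List.length_ofFn (hmem.2 h),
        cutoff_congr (by simp [hP]) h.symm]
    · rw [if_neg (mt hmem.1 h), if_neg h]
  rw [sum_congr rfl fun a _ => hterm a, ← sum_filter, sum_const, nsmul_eq_mul,
    card_filter_take_ofFn_eq hc hP]
  push_cast
  rw [← mul_div_assoc, ← pow_add, Nat.sub_add_cancel hc]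

/-- Claim `DistSame`: in the coupled process of the framework lemma —
sample uniform first-run answers `a ∈ R^t`, sample `u ← U` uniformly, rerun the
deterministic distinguisher answering with `a` until BAD occurs, then sample `v`
uniformly from the consistent set — the resulting pair `(U, V)` is uniform over
`U × V`. Equivalently, for every `u` and `v`, the probability that the process
outputs `v` (given `u`) is `1/|V|`; after multiplying through by `|R|^t`, this reads
`∑_{a ∈ R^t} [v ∈ S(a,u)] / |S(a,u)| = |R|^t / |V|`. -/
theorem stmt_19 {U V D R : Type*} [Fintype U] [Fintype V] [Fintype R]
    [Nonempty U] [Nonempty V] [Nonempty R] [DecidableEq V] [DecidableEq R]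
    (f : U → V → D → R) (BAD : List D → U → Prop) [∀ s u, Decidable (BAD s u)]
    (hmono : ∀ (s₁ : List D) (u : U), BAD s₁ u → ∀ s₂ : List D, s₁ <+: s₂ → BAD s₂ u)
    (t : ℕ)
    (h1 : ∀ q : List D, q.length ≤ t → q.Nodup → ∀ u : U, ¬ BAD q u →
      ∀ ys : List R, ys.length = q.length →
        (Finset.univ.filter (fun v : V => q.map (f u v) = ys)).card
          * (Fintype.card R) ^ q.length = Fintype.card V)
    (nq : List R → D)
    (hdistinct : ∀ a : List R, a.length ≤ t → (queryList nq a).Nodup)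
    (u : U) (v : V) :
    ∑ a : Fin t → R,
      (if v ∈ consistent f nq BAD t (List.ofFn a) u
        then (1 : ℝ) / (consistent f nq BAD t (List.ofFn a) u).card else 0)
      = (Fintype.card R : ℝ) ^ t / Fintype.card V :=
  stmt_19_general f BAD t h1 nq hdistinct u v
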